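/- arXiv:2203.01585 — 3 statements merged into one kernel-verified Lean document; each statement's English description precedes it below -/
import Mathlib

section
/- Let ρ : g → Der(R/I) be a Lie algebra morphism and let ρ̃ : g → Der(R) be any linear lift such that for every x ∈ g, ρ̃(x)(I) ⊆ I and ρ̃(x) induces ρ(x) on R/I. Then ρ̃ is a weak symmetry action of g on the singular foliation F = I·Der(R): (i) [ρ̃(x), I·Der(R)] ⊆ I·Der(R), and (ii) ρ̃([x,y]) − [ρ̃(x), ρ̃(y)] ∈ I·Der(R) for all x, y ∈ g. Moreover any two such lifts ρ̃, ρ̃' are equivalent, i.e. ρ̃(x) − ρ̃'(x) ∈ I·Der(R) for all x. -/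
/-!
A derivation of `R` lifting one of `R ⧸ I` maps `I` into `I`, and two lifts of the same derivation
differ by a derivation with values in `I`. Since `ρ` is a Lie morphism, `ρ' ⁅x, y⁆` and
`⁅ρ' x, ρ' y⁆` both lift `ρ ⁅x, y⁆`, so (ii) and (iii) reduce to: a derivation of `K[x₁,…,x_d]`
taking the variables into `I` lies in `I • Der`, which holds because `D = ∑ D(xᵢ) ∂ᵢ`.
Part (i) is the Leibniz rule `⁅X, f • Y⁆ = X f • Y + f • ⁅X, Y⁆`.
-/

namespace Derivation

variable {K R : Type*} [CommRing K] [CommRing R] [Algebra K R] {I : Ideal R}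

theorem lie_smul_right (X Y : Derivation K R R) (f : R) :
    ⁅X, f • Y⁆ = X f • Y + f • ⁅X, Y⁆ := by
  ext a
  simp only [commutator_apply, coe_smul, Pi.smul_apply, smul_eq_mul, leibniz, add_apply]
  ring

theorem lie_mem_smul_top {X Z : Derivation K R R} (hX : ∀ f ∈ I, X f ∈ I)
    (hZ : Z ∈ I • (⊤ : Submodule R (Derivation K R R))) :
    ⁅X, Z⁆ ∈ I • (⊤ : Submodule R (Derivation K R R)) := by
  refine Submodule.smul_induction_on hZ (fun f hf Y _ => ?_) fun Y₁ Y₂ hY₁ hY₂ => ?_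
  · rw [lie_smul_right]
    exact add_mem (Submodule.smul_mem_smul (hX f hf) trivial) (Submodule.smul_mem_smul hf trivial)
  · rw [lie_add]
    exact add_mem hY₁ hY₂

def IsLift (I : Ideal R) (X : Derivation K R R) (Xbar : Derivation K (R ⧸ I) (R ⧸ I)) : Prop :=
  ∀ f, Ideal.Quotient.mk I (X f) = Xbar (Ideal.Quotient.mk I f)

namespace IsLift

variable {X Y : Derivation K R R} {Xbar Ybar : Derivation K (R ⧸ I) (R ⧸ I)}

theorem map_mem (h : IsLift I X Xbar) {f : R} (hf : f ∈ I) : X f ∈ I := by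
  rw [← Ideal.Quotient.eq_zero_iff_mem, h, Ideal.Quotient.eq_zero_iff_mem.mpr hf, map_zero]

theorem lie (hX : IsLift I X Xbar) (hY : IsLift I Y Ybar) : IsLift I ⁅X, Y⁆ ⁅Xbar, Ybar⁆ :=
  fun f => by simp only [commutator_apply, map_sub, hX _, hY _]

theorem sub_apply_mem (hX : IsLift I X Xbar) (hY : IsLift I Y Xbar) (f : R) : (X - Y) f ∈ I := by
  rw [← Ideal.Quotient.eq_zero_iff_mem, sub_apply, map_sub, hX, hY, sub_self]

end IsLift

end Derivation

namespace MvPolynomial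

variable {σ R : Type*} [Fintype σ] [CommSemiring R]

theorem derivation_eq_sum_smul_pderiv (D : Derivation R (MvPolynomial σ R) (MvPolynomial σ R)) :
    D = ∑ i, D (X i) • pderiv i := by
  classical
  refine derivation_ext fun j => ?_
  rw [← Derivation.coeFnAddMonoidHom_apply (∑ i, _), map_sum, Finset.sum_apply]
  simp [pderiv_X, Pi.single_apply]

theorem derivation_mem_smul_top_of_apply_X_mem {I : Ideal (MvPolynomial σ R)}
    {D : Derivation R (MvPolynomial σ R) (MvPolynomial σ R)} (h : ∀ i, D (X i) ∈ I) :
    D ∈ I • (⊤ : Submodule (MvPolynomial σ R)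
      (Derivation R (MvPolynomial σ R) (MvPolynomial σ R))) := by
  rw [derivation_eq_sum_smul_pderiv D]
  exact Submodule.sum_mem _ fun i _ => Submodule.smul_mem_smul (h i) trivial

end MvPolynomial

set_option synthInstance.maxHeartbeats 400000 in
theorem lift_of_action_on_variety_is_weak_symmetry_general
    (K : Type) [Field K] (d : ℕ)
    (g : Type) [LieRing g] [LieAlgebra K g]
    (I : Ideal (MvPolynomial (Fin d) K))
    (ρ : g →ₗ[K] Derivation K (MvPolynomial (Fin d) K ⧸ I) (MvPolynomial (Fin d) K ⧸ I))
    (hρ : ∀ x y : g, ρ ⁅x, y⁆ = ⁅ρ x, ρ y⁆)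
    (ρ' ρ'' : g →ₗ[K] Derivation K (MvPolynomial (Fin d) K) (MvPolynomial (Fin d) K))
    (hind : ∀ (x : g) (f : MvPolynomial (Fin d) K),
      Ideal.Quotient.mk I (ρ' x f) = ρ x (Ideal.Quotient.mk I f))
    (hind' : ∀ (x : g) (f : MvPolynomial (Fin d) K),
      Ideal.Quotient.mk I (ρ'' x f) = ρ x (Ideal.Quotient.mk I f)) :
    (∀ x : g, ∀ Z ∈ I • (⊤ : Submodule (MvPolynomial (Fin d) K)
        (Derivation K (MvPolynomial (Fin d) K) (MvPolynomial (Fin d) K))),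
      ⁅ρ' x, Z⁆ ∈ I • (⊤ : Submodule (MvPolynomial (Fin d) K)
        (Derivation K (MvPolynomial (Fin d) K) (MvPolynomial (Fin d) K)))) ∧
    (∀ x y : g, ρ' ⁅x, y⁆ - ⁅ρ' x, ρ' y⁆ ∈ I • (⊤ : Submodule (MvPolynomial (Fin d) K)
        (Derivation K (MvPolynomial (Fin d) K) (MvPolynomial (Fin d) K)))) ∧
    (∀ x : g, ρ' x - ρ'' x ∈ I • (⊤ : Submodule (MvPolynomial (Fin d) K)
        (Derivation K (MvPolynomial (Fin d) K) (MvPolynomial (Fin d) K)))) := by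
  have hlift : ∀ x, Derivation.IsLift I (ρ' x) (ρ x) := hind
  refine ⟨fun x Z hZ => Derivation.lie_mem_smul_top (fun _ => (hlift x).map_mem) hZ,
    fun x y => MvPolynomial.derivation_mem_smul_top_of_apply_X_mem fun i => ?_,
    fun x => MvPolynomial.derivation_mem_smul_top_of_apply_X_mem fun i => (hlift x).sub_apply_mem (hind' x) _⟩
  have hlie : Derivation.IsLift I ⁅ρ' x, ρ' y⁆ (ρ ⁅x, y⁆) := hρ x y ▸ (hlift x).lie (hlift y)
  exact (hlift ⁅x, y⁆).sub_apply_mem hlie _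

set_option synthInstance.maxHeartbeats 400000 in
/-- Let `ρ : g → Der(R/I)` be a Lie algebra morphism
(`R = K[x₁,…,x_d]`) and `ρ̃, ρ̃' : g → Der(R)` linear lifts (each `ρ̃ x`
preserves `I` and induces `ρ x` on `R/I`).  Then `ρ̃` is a weak symmetry
action of `g` on `F = I·Der(R)`:
(i) `[ρ̃ x, I·Der(R)] ⊆ I·Der(R)`,
(ii) `ρ̃ [x,y] − [ρ̃ x, ρ̃ y] ∈ I·Der(R)`,
and any two such lifts are equivalent: `ρ̃ x − ρ̃' x ∈ I·Der(R)`. -/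
theorem lift_of_action_on_variety_is_weak_symmetry
    (K : Type) [Field K] (d : ℕ)
    (g : Type) [LieRing g] [LieAlgebra K g]
    (I : Ideal (MvPolynomial (Fin d) K))
    (ρ : g →ₗ[K] Derivation K (MvPolynomial (Fin d) K ⧸ I) (MvPolynomial (Fin d) K ⧸ I))
    (hρ : ∀ x y : g, ρ ⁅x, y⁆ = ⁅ρ x, ρ y⁆)
    (ρ' ρ'' : g →ₗ[K] Derivation K (MvPolynomial (Fin d) K) (MvPolynomial (Fin d) K))
    (hpres : ∀ x : g, ∀ f ∈ I, ρ' x f ∈ I)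
    (hind : ∀ (x : g) (f : MvPolynomial (Fin d) K),
      Ideal.Quotient.mk I (ρ' x f) = ρ x (Ideal.Quotient.mk I f))
    (hpres' : ∀ x : g, ∀ f ∈ I, ρ'' x f ∈ I)
    (hind' : ∀ (x : g) (f : MvPolynomial (Fin d) K),
      Ideal.Quotient.mk I (ρ'' x f) = ρ x (Ideal.Quotient.mk I f)) :
    (∀ x : g, ∀ Z ∈ I • (⊤ : Submodule (MvPolynomial (Fin d) K)
        (Derivation K (MvPolynomial (Fin d) K) (MvPolynomial (Fin d) K))),
      ⁅ρ' x, Z⁆ ∈ I • (⊤ : Submodule (MvPolynomial (Fin d) K)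
        (Derivation K (MvPolynomial (Fin d) K) (MvPolynomial (Fin d) K)))) ∧
    (∀ x y : g, ρ' ⁅x, y⁆ - ⁅ρ' x, ρ' y⁆ ∈ I • (⊤ : Submodule (MvPolynomial (Fin d) K)
        (Derivation K (MvPolynomial (Fin d) K) (MvPolynomial (Fin d) K)))) ∧
    (∀ x : g, ρ' x - ρ'' x ∈ I • (⊤ : Submodule (MvPolynomial (Fin d) K)
        (Derivation K (MvPolynomial (Fin d) K) (MvPolynomial (Fin d) K)))) :=
  lift_of_action_on_variety_is_weak_symmetry_general K d g I ρ hρ ρ' ρ'' hind hind'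
end

section
/- Let p be a strongly singular point of the ideal I, i.e. X(f) ∈ I_p for every f ∈ I and every derivation X, where I_p is the maximal ideal at p with I ⊆ I_p. Then the Lie bracket of any two elements of F = I·Der(R) lies in I_p·F. In particular, the isotropy Lie algebra F(p)/(I_p·F) of F at p is abelian. -/
/-!
By the Leibniz rule for brackets of derivations,
`⁅f • X, g • Y⁆ = (f * g) • ⁅X, Y⁆ + (f * X g) • Y - (g * Y f) • X`.
For `f, g ∈ I` each coefficient is a product of an element of `I` (placing the term in `F`)
and an element of `I_p`: `f ∈ I ⊆ I_p` in the first term, and `X g, Y f ∈ I_p` by strong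
singularity in the others. Bilinearity of the bracket extends this from the generators
`f • X` of `F` to all of `F`.
-/

namespace Derivation

variable {R A : Type*} [CommRing R] [CommRing A] [Algebra R A]

theorem smul_lie_smul (f g : A) (X Y : Derivation R A A) :
    ⁅f • X, g • Y⁆ = (f * g) • ⁅X, Y⁆ + (f * X g) • Y - (g * Y f) • X := by
  ext a
  simp only [commutator_apply, smul_eq_mul, leibniz, add_apply, sub_apply, smul_apply]
  ring

end Derivation

section

variable {A M : Type*} [CommRing A] [AddCommGroup M] [Module A M]

theorem mul_smul_mem_smul_smul_top {I J : Ideal A} {a b : A} (ha : a ∈ J) (hb : b ∈ I)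
    (x : M) : (a * b) • x ∈ J • I • (⊤ : Submodule A M) := by
  rw [mul_smul]
  exact Submodule.smul_mem_smul ha (Submodule.smul_mem_smul hb trivial)

variable {R : Type*} [CommRing R] [Algebra R A]

theorem lie_smul_smul_mem_smul_smul_top {I J : Ideal A} (hle : I ≤ J)
    (hss : ∀ f ∈ I, ∀ X : Derivation R A A, X f ∈ J) {f g : A} (hf : f ∈ I) (hg : g ∈ I)
    (X Y : Derivation R A A) :
    ⁅f • X, g • Y⁆ ∈ J • I • (⊤ : Submodule A (Derivation R A A)) := by
  rw [Derivation.smul_lie_smul]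
  refine sub_mem (add_mem ?_ ?_) ?_
  · exact mul_smul_mem_smul_smul_top (hle hf) hg _
  · rw [mul_comm]
    exact mul_smul_mem_smul_smul_top (hss g hg X) hf _
  · rw [mul_comm]
    exact mul_smul_mem_smul_smul_top (hss f hf Y) hg _

end

theorem strongly_singular_isotropy_abelian_general
    (K R : Type) [CommRing K] [CommRing R] [Algebra K R]
    (I Ip : Ideal R) (hle : I ≤ Ip)
    (hss : ∀ f ∈ I, ∀ X : Derivation K R R, X f ∈ Ip) :
    ∀ Z ∈ I • (⊤ : Submodule R (Derivation K R R)),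
      ∀ W ∈ I • (⊤ : Submodule R (Derivation K R R)),
        ⁅Z, W⁆ ∈ Ip • (I • (⊤ : Submodule R (Derivation K R R))) := by
  intro Z hZ W hW
  refine Submodule.smul_induction_on hZ (fun f hf X _ => ?_) fun Z₁ Z₂ h₁ h₂ => ?_
  · refine Submodule.smul_induction_on hW (fun g hg Y _ => ?_) fun W₁ W₂ h₁ h₂ => ?_
    · exact lie_smul_smul_mem_smul_smul_top hle hss hf hg X Y
    · exact lie_add (f • X) W₁ W₂ ▸ add_mem h₁ h₂
  · exact add_lie Z₁ Z₂ W ▸ add_mem h₁ h₂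

/-- Let `p` be a strongly singular point of the ideal `I`
(i.e. `X f ∈ I_p` for every `f ∈ I` and every derivation `X`, where `I_p` is
the maximal ideal at `p` containing `I`).  Then the Lie bracket of any two
elements of `F = I·Der(R)` lies in `I_p·F`.  In particular the isotropy Lie
algebra `F(p)/(I_p·F)` is abelian. -/
theorem strongly_singular_isotropy_abelian
    (K R : Type) [CommRing K] [CommRing R] [Algebra K R]
    (I Ip : Ideal R) (hIp : Ip.IsMaximal) (hle : I ≤ Ip)
    (hss : ∀ f ∈ I, ∀ X : Derivation K R R, X f ∈ Ip) :
    ∀ Z ∈ I • (⊤ : Submodule R (Derivation K R R)),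
      ∀ W ∈ I • (⊤ : Submodule R (Derivation K R R)),
        ⁅Z, W⁆ ∈ Ip • (I • (⊤ : Submodule R (Derivation K R R))) :=
  strongly_singular_isotropy_abelian_general K R I Ip hle hss
end

section
/- Projection of a weak symmetry action to the leaf space is strict: with π : R_N → R_M injective, if ρ̃ : g → Der(R_M) is a weak symmetry action of g on K_π = {W : W(π(R_N)) = 0} such that each ρ̃(x) is π-projectable onto some ρ(x) ∈ Der(R_N), then x ↦ ρ(x) is a Lie algebra morphism g → Der(R_N). -/
/-! Projectability is preserved by sums, scalar multiples and commutators of derivations, and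
the projection is unique because `π` is injective. Hence `ρ` is linear, and `ρ ⁅x, y⁆` and
`⁅ρ x, ρ y⁆` are both projections of `ρ' ⁅x, y⁆`: of the latter because the defect
`ρ' ⁅x, y⁆ - ⁅ρ' x, ρ' y⁆` lies in `K_π`, i.e. projects onto `0`. -/

namespace Derivation

variable {K RN RM : Type*} [CommRing K] [CommRing RN] [CommRing RM]
  [Algebra K RN] [Algebra K RM]

def IsProjectable (π : RN →ₐ[K] RM) (W : Derivation K RM RM) (Y : Derivation K RN RN) :
    Prop :=
  ∀ f : RN, W (π f) = π (Y f)

namespace IsProjectable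

variable {π : RN →ₐ[K] RM} {W V : Derivation K RM RM} {Y Z : Derivation K RN RN}

theorem unique (hπ : Function.Injective π) (hY : IsProjectable π W Y)
    (hZ : IsProjectable π W Z) : Y = Z :=
  Derivation.ext fun f => hπ <| (hY f).symm.trans (hZ f)

theorem add (hW : IsProjectable π W Y) (hV : IsProjectable π V Z) :
    IsProjectable π (W + V) (Y + Z) := fun f => by
  simp only [add_apply, hW f, hV f, map_add]

theorem smul (c : K) (hW : IsProjectable π W Y) : IsProjectable π (c • W) (c • Y) :=
  fun f => by simp only [smul_apply, hW f, _root_.map_smul]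

theorem lie (hW : IsProjectable π W Y) (hV : IsProjectable π V Z) :
    IsProjectable π ⁅W, V⁆ ⁅Y, Z⁆ := fun f => by
  simp only [commutator_apply, hW _, hV _, map_sub]

theorem of_sub_eq_zero (hV : IsProjectable π V Y) (hWV : ∀ f : RN, (W - V) (π f) = 0) :
    IsProjectable π W Y := fun f => by
  rw [← hV f, ← sub_eq_zero, ← sub_apply, hWV f]

end IsProjectable

end Derivation

open Derivation in
theorem projected_action_is_strict_general
    (K RN RM : Type) [CommRing K] [CommRing RN] [CommRing RM]
    [Algebra K RN] [Algebra K RM]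
    (π : RN →ₐ[K] RM) (hπ : Function.Injective π)
    (g : Type) [LieRing g] [LieAlgebra K g]
    (ρ' : g →ₗ[K] Derivation K RM RM)
    (ρ : g → Derivation K RN RN)
    (hproj : ∀ (x : g) (f : RN), ρ' x (π f) = π (ρ x f))
    (hweak2 : ∀ (x y : g) (f : RN), (ρ' ⁅x, y⁆ - ⁅ρ' x, ρ' y⁆) (π f) = 0) :
    (∀ x y : g, ρ (x + y) = ρ x + ρ y) ∧
    (∀ (c : K) (x : g), ρ (c • x) = c • ρ x) ∧
    (∀ x y : g, ρ ⁅x, y⁆ = ⁅ρ x, ρ y⁆) := by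
  have hρ (x : g) : IsProjectable π (ρ' x) (ρ x) := hproj x
  refine ⟨fun x y => ?_, fun c x => ?_, fun x y => ?_⟩
  · exact (hρ (x + y)).unique hπ <| by simpa only [map_add] using (hρ x).add (hρ y)
  · exact (hρ (c • x)).unique hπ <| by simpa only [_root_.map_smul] using (hρ x).smul c
  · exact (hρ ⁅x, y⁆).unique hπ <| ((hρ x).lie (hρ y)).of_sub_eq_zero (hweak2 x y)

/-- Projection of a weak symmetry action to the leaf space is
strict: with `π : R_N → R_M` injective, if `ρ̃ : g → Der(R_M)` is a weak
symmetry action of `g` on `K_π = {W : W(π(R_N)) = 0}` such that each `ρ̃ x`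
is `π`-projectable onto `ρ x ∈ Der(R_N)`, then `x ↦ ρ x` is a Lie algebra
morphism `g → Der(R_N)`. -/
theorem projected_action_is_strict
    (K RN RM : Type) [CommRing K] [CommRing RN] [CommRing RM]
    [Algebra K RN] [Algebra K RM]
    (π : RN →ₐ[K] RM) (hπ : Function.Injective π)
    (g : Type) [LieRing g] [LieAlgebra K g]
    (ρ' : g →ₗ[K] Derivation K RM RM)
    (ρ : g → Derivation K RN RN)
    (hproj : ∀ (x : g) (f : RN), ρ' x (π f) = π (ρ x f))
    (hweak1 : ∀ x : g, ∀ W : Derivation K RM RM, (∀ f : RN, W (π f) = 0) →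
      ∀ f : RN, ⁅ρ' x, W⁆ (π f) = 0)
    (hweak2 : ∀ (x y : g) (f : RN), (ρ' ⁅x, y⁆ - ⁅ρ' x, ρ' y⁆) (π f) = 0) :
    (∀ x y : g, ρ (x + y) = ρ x + ρ y) ∧
    (∀ (c : K) (x : g), ρ (c • x) = c • ρ x) ∧
    (∀ x y : g, ρ ⁅x, y⁆ = ⁅ρ x, ρ y⁆) :=
  projected_action_is_strict_general K RN RM π hπ g ρ' ρ hproj hweak2
end
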